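/- arXiv:2604.06194 — 5 statements merged into one kernel-verified Lean document; each statement's English description precedes it below -/
import Mathlib

section
/- Fix q ∈ D(X) and v̄, w ≥ 0, and suppose v̄ + w < V^{v̄,w}(g;q) + c. Let ṽ := V^{v̄,w}(g;q) + c − w. Then ṽ > v̄ and there exists w̃ ∈ [0, w] such that ṽ + w̃ = V^{ṽ,w̃}(g;q) + c ≥ ṽ, and for every x ∈ X: if U^{v̄,w}(x;q) ≥ V^{v̄,w}(g;q) then U^{ṽ,w̃}(x;q) ≥ V^{ṽ,w̃}(g;q), and if U^{v̄,w}(x;q) ≤ V^{v̄,w}(g;q) then U^{ṽ,w̃}(x;q) ≤ V^{ṽ,w̃}(g;q); that is, any profit-maximizing creation decision of x under (v̄, w) remains profit-maximizing under (ṽ, w̃). -/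
open MeasureTheory Real Set Filter Topology
open scoped ENNReal

noncomputable section

namespace GenAIPlatform

/-- `D(X)`: upper-semicontinuous densities on `X` with a positive lower bound. -/
def DSet {d : ℕ} (X : Set (Fin d → ℝ)) : Set ((Fin d → ℝ) → ℝ) :=
  {q | UpperSemicontinuousOn q X ∧ ∃ ε : ℝ, 0 < ε ∧ ∀ x ∈ X, ε ≤ q x}

/-- `P(X)`: probability densities on `X`. -/
def PSet {d : ℕ} (X : Set (Fin d → ℝ)) : Set ((Fin d → ℝ) → ℝ) :=
  {q | q ∈ DSet X ∧ ∫ x in X, q x = 1}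

/-- The revenue `V(y;q)` of content `y` under content density `q`. -/
def Rev {d : ℕ} (p : (Fin d → ℝ) → ℝ) (α γ : ℝ) (q : (Fin d → ℝ) → ℝ)
    (y : Fin d → ℝ) : ℝ :=
  (1 - γ) * (p y / q y) ^ α

/-- A compensation scheme `W(x;q)`. -/
abbrev Scheme (d : ℕ) := (Fin d → ℝ) → ((Fin d → ℝ) → ℝ) → ℝ

/-- Compensated revenue `V^W(y;q)`. -/
def RevW {d : ℕ} (p : (Fin d → ℝ) → ℝ) (α γ : ℝ) (W : Scheme d)
    (q : (Fin d → ℝ) → ℝ) (y : Fin d → ℝ) : ℝ :=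
  Rev p α γ q y + W y q

/-- Profit from manual creation `U^W(x;q)`. -/
def UtilW {d : ℕ} (p : (Fin d → ℝ) → ℝ) (α γ c : ℝ) (W : Scheme d)
    (q : (Fin d → ℝ) → ℝ) (x : Fin d → ℝ) : ℝ :=
  RevW p α γ W q x - c

/-- Expected compensated revenue from GenAI `V^W(g;q)`. -/
def RevWg {d : ℕ} (X : Set (Fin d → ℝ)) (p g : (Fin d → ℝ) → ℝ) (α γ : ℝ)
    (W : Scheme d) (q : (Fin d → ℝ) → ℝ) : ℝ :=
  ∫ y in X, RevW p α γ W q y * g y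

/-- The revenue-threshold compensation scheme `(v, w)`. -/
def Wthr {d : ℕ} (p : (Fin d → ℝ) → ℝ) (α γ v w : ℝ) : Scheme d :=
  fun x q => if v ≤ Rev p α γ q x then w else 0

/-- Platform profit `Π^W(q)` (per consumer). -/
def Profit {d : ℕ} (X : Set (Fin d → ℝ)) (p : (Fin d → ℝ) → ℝ) (α γ : ℝ)
    (W : Scheme d) (q : (Fin d → ℝ) → ℝ) : ℝ :=
  γ * ∫ x in X, p x ^ α * q x ^ (1 - α) - ∫ x in X, W x q * q x

/-- Mean-field equilibrium with GenAI available: `β` is the GenAI-usage propensity,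
`q` the content density. -/
def IsEquilibrium {d : ℕ} (X : Set (Fin d → ℝ)) (p g : (Fin d → ℝ) → ℝ)
    (α γ c : ℝ) (W : Scheme d) (β q : (Fin d → ℝ) → ℝ) : Prop :=
  (∀ x ∈ X, β x ∈ Icc (0 : ℝ) 1) ∧ q ∈ DSet X ∧
  (∀ x ∈ X, RevWg X p g α γ W q < UtilW p α γ c W q x → β x = 0) ∧
  (∀ x ∈ X, UtilW p α γ c W q x < RevWg X p g α γ W q → β x = 1) ∧
  (∀ x ∈ X, q x = (1 - β x) * p x + g x * ∫ y in X, β y * p y)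

end GenAIPlatform

/-! Write the GenAI value of the threshold scheme `(t, w)` as `A + w * m t`, where `A = ∫ V g` and
`m t` is the `g`-mass of `{V ≥ t}`. The equation defining `ṽ` then says
`w̃ * (1 - m ṽ) = w * (1 - m v̄)`, which has a solution in `[0, w]` because `m` is antitone and
bounded by `1`. A creator who weakly prefers manual creation under `(v̄, w)` has `V x ≥ ṽ`, so it
receives the new bonus and still weakly prefers it; one who weakly prefers GenAI has `V x ≤ ṽ`,
and `ṽ + w̃ - c` is exactly the new GenAI value. -/

theorem UpperSemicontinuousOn.aemeasurable {α β : Type*} [TopologicalSpace α] [MeasurableSpace α]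
    [OpensMeasurableSpace α] [LinearOrder β] [TopologicalSpace β] [OrderTopology β]
    [SecondCountableTopology β] [MeasurableSpace β] [BorelSpace β] {f : α → β} {s : Set α}
    {μ : Measure α} (hf : UpperSemicontinuousOn f s) (hs : MeasurableSet s) :
    AEMeasurable f (μ.restrict s) := by
  classical
  nontriviality α
  inhabit α
  refine ⟨s.piecewise f fun _ => f default, ?_, (piecewise_ae_eq_restrict hs).symm⟩
  refine measurable_of_Iio fun b => ?_
  obtain ⟨u, hu, hsu⟩ := upperSemicontinuousOn_iff_preimage_Iio.1 hf b
  rw [piecewise_preimage, Set.ite, inter_comm, hsu]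
  exact (hs.inter hu.measurableSet).union ((measurable_const measurableSet_Iio).diff hs)

section Threshold

variable {Ω : Type*} [MeasurableSpace Ω] {μ : Measure Ω} {V g : Ω → ℝ}

theorem integral_add_ite_mul (hV : AEMeasurable V μ) (hVg : Integrable (fun y => V y * g y) μ)
    (hg : Integrable g μ) (t w : ℝ) :
    ∫ y, (V y + if t ≤ V y then w else 0) * g y ∂μ =
      ∫ y, V y * g y ∂μ + w * ∫ y in {y | t ≤ V y}, g y ∂μ := by
  have hs : NullMeasurableSet {y | t ≤ V y} μ := hV.nullMeasurable measurableSet_Ici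
  have hsplit : (fun y => (V y + if t ≤ V y then w else 0) * g y) =
      fun y => V y * g y + w * {y | t ≤ V y}.indicator g y := by
    ext y
    simp only [indicator_apply, mem_ofPred_eq]
    split_ifs <;> ring
  rw [hsplit, integral_add hVg ((hg.indicator₀ hs).const_mul w), integral_const_mul,
    integral_indicator₀ hs]

theorem antitone_setIntegral_setOf_le (hg : Integrable g μ) (hg0 : 0 ≤ᵐ[μ] g) :
    Antitone fun t => ∫ y in {y | t ≤ V y}, g y ∂μ := fun _ _ hst =>
  setIntegral_mono_set hg.integrableOn (ae_restrict_of_ae hg0)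
    (LE.le.eventuallyLE fun _ hy => le_trans hst hy)

end Threshold

theorem exists_mem_Icc_mul_one_sub_eq {a b w : ℝ} (hw : 0 ≤ w) (hba : b ≤ a) (ha : a ≤ 1) :
    ∃ w' ∈ Icc 0 w, w' * (1 - b) = w * (1 - a) := by
  rcases hba.lt_or_eq with hb | rfl
  · have hb1 : 0 < 1 - b := by linarith
    refine ⟨w * (1 - a) / (1 - b), ⟨by positivity, ?_⟩, by field_simp⟩
    rw [div_le_iff₀ hb1]
    gcongr
  · exact ⟨w, ⟨hw, le_rfl⟩, rfl⟩

namespace GenAIPlatform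

variable {d : ℕ} {X : Set (Fin d → ℝ)} {p q g : (Fin d → ℝ) → ℝ} {α γ : ℝ}
  {μ : Measure (Fin d → ℝ)}

theorem aemeasurable_rev (hX : MeasurableSet X) (hp : UpperSemicontinuousOn p X)
    (hq : UpperSemicontinuousOn q X) : AEMeasurable (Rev p α γ q) (μ.restrict X) :=
  (((hp.aemeasurable hX).div (hq.aemeasurable hX)).pow_const α).const_mul (1 - γ)

theorem integrable_rev_mul (hXc : IsCompact X) (hp : p ∈ DSet X) (hq : q ∈ DSet X)
    (hα : 0 ≤ α) (hg : Integrable g (μ.restrict X)) :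
    Integrable (fun y => Rev p α γ q y * g y) (μ.restrict X) := by
  obtain ⟨hp_usc, εp, hεp, hεp_le⟩ := hp
  obtain ⟨hq_usc, εq, hεq, hεq_le⟩ := hq
  obtain ⟨M, hM⟩ := hp_usc.bddAbove_of_isCompact hXc
  refine hg.bdd_mul (c := |1 - γ| * (M / εq) ^ α)
    (aemeasurable_rev hXc.measurableSet hp_usc hq_usc).aestronglyMeasurable ?_
  filter_upwards [ae_restrict_mem hXc.measurableSet] with y hy
  have hpy : 0 ≤ p y := hεp.le.trans (hεp_le y hy)
  have hqy : 0 ≤ q y := hεq.le.trans (hεq_le y hy)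
  have hratio : p y / q y ≤ M / εq :=
    div_le_div₀ (hpy.trans (hM (mem_image_of_mem p hy))) (hM (mem_image_of_mem p hy)) hεq
      (hεq_le y hy)
  rw [Rev, norm_mul, Real.norm_eq_abs, Real.norm_of_nonneg (by positivity)]
  gcongr

theorem wthr_decision_preserved {c v w vt wt : ℝ} {x : Fin d → ℝ} (hv : v ≤ vt) (hw : 0 ≤ w)
    (hwt : 0 ≤ wt)
    (hvt : vt = RevWg X p g α γ (Wthr p α γ v w) q + c - w)
    (hvt_wt : vt + wt = RevWg X p g α γ (Wthr p α γ vt wt) q + c) :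
    (RevWg X p g α γ (Wthr p α γ v w) q ≤ UtilW p α γ c (Wthr p α γ v w) q x →
      RevWg X p g α γ (Wthr p α γ vt wt) q ≤ UtilW p α γ c (Wthr p α γ vt wt) q x) ∧
    (UtilW p α γ c (Wthr p α γ v w) q x ≤ RevWg X p g α γ (Wthr p α γ v w) q →
      UtilW p α γ c (Wthr p α γ vt wt) q x ≤ RevWg X p g α γ (Wthr p α γ vt wt) q) := by
  simp only [UtilW, RevW, Wthr]
  split_ifs <;> constructor <;> intro h <;> linarith

theorem stmt4_general {d : ℕ} (X : Set (Fin d → ℝ))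
    (hXc : IsCompact X)
    (p g : (Fin d → ℝ) → ℝ) (hp : p ∈ PSet X) (hg : g ∈ PSet X)
    (α γ c : ℝ) (hα : α ∈ Ioo (0 : ℝ) 1)
    (q : (Fin d → ℝ) → ℝ) (hq : q ∈ DSet X)
    (v w : ℝ) (hw : 0 ≤ w)
    (h : v + w < RevWg X p g α γ (Wthr p α γ v w) q + c) :
    ∀ vt : ℝ, vt = RevWg X p g α γ (Wthr p α γ v w) q + c - w →
      v < vt ∧
      ∃ wt ∈ Icc (0 : ℝ) w,
        vt + wt = RevWg X p g α γ (Wthr p α γ vt wt) q + c ∧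
        vt ≤ RevWg X p g α γ (Wthr p α γ vt wt) q + c ∧
        ∀ x ∈ X,
          (RevWg X p g α γ (Wthr p α γ v w) q ≤ UtilW p α γ c (Wthr p α γ v w) q x →
            RevWg X p g α γ (Wthr p α γ vt wt) q ≤ UtilW p α γ c (Wthr p α γ vt wt) q x) ∧
          (UtilW p α γ c (Wthr p α γ v w) q x ≤ RevWg X p g α γ (Wthr p α γ v w) q →
            UtilW p α γ c (Wthr p α γ vt wt) q x ≤ RevWg X p g α γ (Wthr p α γ vt wt) q) := by
  intro vt hvt
  obtain ⟨⟨-, εg, hεg, hεg_le⟩, hg_one⟩ := hg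
  have hg_int : Integrable g (volume.restrict X) := .of_integral_ne_zero (by simp [hg_one])
  have hg0 : 0 ≤ᵐ[volume.restrict X] g := by
    filter_upwards [ae_restrict_mem hXc.measurableSet] with y hy
    exact hεg.le.trans (hεg_le y hy)
  set m := fun t => ∫ y in {y | t ≤ Rev p α γ q y}, g y ∂(volume.restrict X)
  have hRevWg (t w' : ℝ) : RevWg X p g α γ (Wthr p α γ t w') q =
      (∫ y in X, Rev p α γ q y * g y) + w' * m t :=
    integral_add_ite_mul (aemeasurable_rev hXc.measurableSet hp.1.1 hq.1)
      (integrable_rev_mul hXc hp.1 hq hα.1.le hg_int) hg_int t w'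
  have hv_lt : v < vt := by linarith
  obtain ⟨wt, hwt, hwt_eq⟩ := exists_mem_Icc_mul_one_sub_eq hw
    (antitone_setIntegral_setOf_le hg_int hg0 hv_lt.le)
    (hg_one ▸ setIntegral_le_integral hg_int hg0)
  have hvt_wt : vt + wt = RevWg X p g α γ (Wthr p α γ vt wt) q + c := by
    rw [hRevWg] at hvt ⊢
    linear_combination hvt + hwt_eq
  exact ⟨hv_lt, wt, hwt, hvt_wt, by linarith [hwt.1], fun x _ =>
    wthr_decision_preserved hv_lt.le hw hwt.1 hvt hvt_wt⟩

/-- Lemma 2, part 3: reduction of an ineffective threshold. -/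
theorem stmt4 {d : ℕ} (hd : 1 ≤ d) (X : Set (Fin d → ℝ))
    (hXc : IsCompact X) (hX0 : 0 < volume X)
    (p g : (Fin d → ℝ) → ℝ) (hp : p ∈ PSet X) (hg : g ∈ PSet X)
    (α γ c : ℝ) (hα : α ∈ Ioo (0 : ℝ) 1) (hγ : γ ∈ Icc (0 : ℝ) 1) (hc : 0 < c)
    (q : (Fin d → ℝ) → ℝ) (hq : q ∈ DSet X)
    (v w : ℝ) (hv : 0 ≤ v) (hw : 0 ≤ w)
    (h : v + w < RevWg X p g α γ (Wthr p α γ v w) q + c) :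
    ∀ vt : ℝ, vt = RevWg X p g α γ (Wthr p α γ v w) q + c - w →
      v < vt ∧
      ∃ wt ∈ Icc (0 : ℝ) w,
        vt + wt = RevWg X p g α γ (Wthr p α γ vt wt) q + c ∧
        vt ≤ RevWg X p g α γ (Wthr p α γ vt wt) q + c ∧
        ∀ x ∈ X,
          (RevWg X p g α γ (Wthr p α γ v w) q ≤ UtilW p α γ c (Wthr p α γ v w) q x →
            RevWg X p g α γ (Wthr p α γ vt wt) q ≤ UtilW p α γ c (Wthr p α γ vt wt) q x) ∧
          (UtilW p α γ c (Wthr p α γ v w) q x ≤ RevWg X p g α γ (Wthr p α γ v w) q →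
            UtilW p α γ c (Wthr p α γ vt wt) q x ≤ RevWg X p g α γ (Wthr p α γ vt wt) q) :=
  stmt4_general X hXc p g hp hg α γ c hα q hq v w hw h

end GenAIPlatform
end
end

section
/- Let (β, q) be any equilibrium with GenAI available under a revenue-threshold compensation scheme (v̄, w) with v̄, w ≥ 0. Then the set X_H := {x ∈ X : U^{v̄,w}(x;q) > V^{v̄,w}(g;q)} of creators who strictly prefer manual creation is empty, and the set X_AI := {x ∈ X : U^{v̄,w}(x;q) < V^{v̄,w}(g;q)} of creators who strictly prefer GenAI has positive Lebesgue measure. -/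
/-!
Averaged against `g`, manual creation earns `V^W(g;q) - c < V^W(g;q)`, so a positive-measure set
of creators strictly prefers GenAI. GenAI only redistributes mass, so `∫ q = ∫ p`. Non-users have
`q = p + g ∫ βp ≥ p`; if every GenAI user `y` had `q y > p y`, then `q ≥ p` with equal integrals
forces `q = p` a.e., impossible on the positive-measure set of GenAI users. So some GenAI user `y`
has `q y ≤ p y`, hence revenue at least `1 - γ`, while a creator `x` who strictly prefers manual
creation is a non-user, so `q x ≥ p x` and its revenue is at most `1 - γ`. Threshold compensation
is monotone in revenue, so `x` is no better off than `y`, who weakly prefers GenAI.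
-/

open MeasureTheory Real Set Filter Topology
open scoped ENNReal

noncomputable section

section Semicontinuity

variable {α β : Type*} [TopologicalSpace α] [MeasurableSpace α] [OpensMeasurableSpace α]
  {s : Set α}

theorem UpperSemicontinuousOn.aemeasurable_restrict [TopologicalSpace β] [MeasurableSpace β]
    [BorelSpace β] [LinearOrder β] [OrderTopology β] [SecondCountableTopology β] {f : α → β}
    (hs : MeasurableSet s) (hf : UpperSemicontinuousOn f s) (μ : Measure α) :
    AEMeasurable f (μ.restrict s) :=
  aemeasurable_restrict_of_measurable_subtype hs
    (upperSemicontinuousOn_iff_restrict.mpr hf).measurable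

theorem UpperSemicontinuousOn.integrableOn_of_isCompact [T2Space α] {μ : Measure α}
    [IsFiniteMeasureOnCompacts μ] {f : α → ℝ} (hs : IsCompact s)
    (hf : UpperSemicontinuousOn f s) (hf0 : ∀ x ∈ s, 0 ≤ f x) : IntegrableOn f s μ := by
  have hsm := hs.isClosed.measurableSet
  obtain ⟨M, hM⟩ := hf.bddAbove_of_isCompact hs
  refine .of_bound hs.measure_lt_top (hf.aemeasurable_restrict hsm μ).aestronglyMeasurable M ?_
  filter_upwards [ae_restrict_mem hsm] with x hx
  rw [Real.norm_eq_abs, abs_of_nonneg (hf0 x hx)]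
  exact hM (mem_image_of_mem f hx)

end Semicontinuity

section Averaging

variable {α : Type*} [MeasurableSpace α] {μ : Measure α} {s : Set α}

theorem measure_sep_eq_zero_iff_ae_restrict (hs : MeasurableSet s) {P : α → Prop} :
    μ {x ∈ s | P x} = 0 ↔ ∀ᵐ x ∂μ.restrict s, ¬ P x := by
  rw [ae_restrict_iff' hs, ae_iff]
  simp only [Classical.not_imp, not_not]

theorem measure_sep_sub_lt_integral_mul_pos (hs : MeasurableSet s) {f g : α → ℝ}
    (hg0 : ∀ x ∈ s, 0 ≤ g x) (hg : IntegrableOn g s μ) (hg1 : ∫ x in s, g x ∂μ = 1)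
    (hfg : IntegrableOn (fun x => f x * g x) s μ) {c : ℝ} (hc : 0 < c) :
    0 < μ {x ∈ s | f x - c < ∫ y in s, f y * g y ∂μ} := by
  set I := ∫ y in s, f y * g y ∂μ
  refine pos_iff_ne_zero.mpr fun h0 => ?_
  have hae : ∀ᵐ x ∂μ.restrict s, I + c ≤ f x :=
    ((measure_sep_eq_zero_iff_ae_restrict hs).mp h0).mono fun x hx => by linarith [not_lt.mp hx]
  have hle : ∫ x in s, (I + c) * g x ∂μ ≤ I := by
    refine integral_mono_ae (hg.const_mul _) hfg ?_
    filter_upwards [hae, ae_restrict_mem hs] with x hfx hx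
    exact mul_le_mul_of_nonneg_right hfx (hg0 x hx)
  rw [integral_const_mul, hg1, mul_one] at hle
  linarith

end Averaging

namespace GenAIPlatform

variable {d : ℕ} {X : Set (Fin d → ℝ)} {p g q β : (Fin d → ℝ) → ℝ} {α γ c v w : ℝ}

theorem pos_of_mem_DSet (hq : q ∈ DSet X) {x : Fin d → ℝ} (hx : x ∈ X) : 0 < q x := by
  obtain ⟨-, ε, hε, hεq⟩ := hq
  exact hε.trans_le (hεq x hx)

theorem integrableOn_of_mem_DSet (hX : IsCompact X) (hq : q ∈ DSet X) : IntegrableOn q X :=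
  hq.1.integrableOn_of_isCompact hX fun _ hx => (pos_of_mem_DSet hq hx).le

theorem Rev_le_Rev_of_div_le (hα : 0 ≤ α) (hγ : γ ≤ 1) {x y : Fin d → ℝ} (hx : 0 ≤ p x / q x)
    (hxy : p x / q x ≤ p y / q y) : Rev p α γ q x ≤ Rev p α γ q y :=
  mul_le_mul_of_nonneg_left (rpow_le_rpow hx hxy hα) (by linarith)

theorem RevW_Wthr_le_of_Rev_le (hw : 0 ≤ w) {x y : Fin d → ℝ}
    (hxy : Rev p α γ q x ≤ Rev p α γ q y) :
    RevW p α γ (Wthr p α γ v w) q x ≤ RevW p α γ (Wthr p α γ v w) q y := by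
  refine add_le_add hxy ?_
  simp only [Wthr]
  split_ifs with hx hy <;> first | exact le_rfl | exact hw | exact absurd (hx.trans hxy) hy

theorem aemeasurable_RevW_Wthr {μ : Measure (Fin d → ℝ)} (hp : AEMeasurable p μ)
    (hq : AEMeasurable q μ) (hα : 0 ≤ α) :
    AEMeasurable (RevW p α γ (Wthr p α γ v w) q) μ := by
  have hRev : AEMeasurable (Rev p α γ q) μ :=
    aemeasurable_const.mul ((continuous_rpow_const hα).measurable.comp_aemeasurable (hp.div hq))
  have hstep : Measurable fun t : ℝ => t + if v ≤ t then w else 0 :=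
    measurable_id.add (Measurable.ite measurableSet_Ici measurable_const measurable_const)
  exact hstep.comp_aemeasurable hRev

theorem abs_RevW_Wthr_le (hX : IsCompact X) (hp : p ∈ DSet X) (hq : q ∈ DSet X) (hα : 0 ≤ α) :
    ∃ C, ∀ y ∈ X, |RevW p α γ (Wthr p α γ v w) q y| ≤ C := by
  obtain ⟨M, hM⟩ := hp.1.bddAbove_of_isCompact hX
  obtain ⟨-, ε, hε, hεq⟩ := hq
  refine ⟨|1 - γ| * (M / ε) ^ α + |w|, fun y hy => ?_⟩
  have hpy := (pos_of_mem_DSet hp hy).le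
  have hratio0 : 0 ≤ p y / q y := div_nonneg hpy (hε.le.trans (hεq y hy))
  have hratio : p y / q y ≤ M / ε :=
    div_le_div₀ (hpy.trans (hM (mem_image_of_mem p hy))) (hM (mem_image_of_mem p hy)) hε (hεq y hy)
  have hRev : |Rev p α γ q y| ≤ |1 - γ| * (M / ε) ^ α := by
    rw [Rev, abs_mul, abs_of_nonneg (rpow_nonneg hratio0 α)]
    exact mul_le_mul_of_nonneg_left (rpow_le_rpow hratio0 hratio hα) (abs_nonneg _)
  have hW : |Wthr p α γ v w y q| ≤ |w| := by
    simp only [Wthr]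
    split_ifs <;> simp
  exact (abs_add_le _ _).trans (add_le_add hRev hW)

theorem integrableOn_RevW_Wthr_mul (hX : IsCompact X) (hp : p ∈ DSet X) (hq : q ∈ DSet X)
    (hg : IntegrableOn g X) (hα : 0 ≤ α) :
    IntegrableOn (fun y => RevW p α γ (Wthr p α γ v w) q y * g y) X := by
  have hXm := hX.isClosed.measurableSet
  obtain ⟨C, hC⟩ := abs_RevW_Wthr_le hX hp hq hα
  refine hg.bdd_mul (c := C) (aemeasurable_RevW_Wthr (hp.1.aemeasurable_restrict hXm _)
    (hq.1.aemeasurable_restrict hXm _) hα).aestronglyMeasurable ?_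
  filter_upwards [ae_restrict_mem hXm] with y hy
  exact hC y hy

namespace IsEquilibrium

variable {W : Scheme d}

theorem le_of_beta_eq_zero (heq : IsEquilibrium X p g α γ c W β q) (hX : MeasurableSet X)
    (hp0 : ∀ x ∈ X, 0 ≤ p x) (hg0 : ∀ x ∈ X, 0 ≤ g x) {x : Fin d → ℝ} (hx : x ∈ X)
    (hβx : β x = 0) : p x ≤ q x := by
  obtain ⟨hβ, -, -, -, hq⟩ := heq
  have hB : 0 ≤ ∫ y in X, β y * p y :=
    setIntegral_nonneg hX fun y hy => mul_nonneg (hβ y hy).1 (hp0 y hy)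
  rw [hq x hx, hβx]
  linarith [mul_nonneg (hg0 x hx) hB]

theorem setIntegral_eq (heq : IsEquilibrium X p g α γ c W β q) (hX : MeasurableSet X)
    (hp : IntegrableOn p X) (hg : IntegrableOn g X) (hg1 : ∫ x in X, g x = 1)
    (hq : IntegrableOn q X) : ∫ x in X, q x = ∫ x in X, p x := by
  obtain ⟨-, -, -, -, hcons⟩ := heq
  set B := ∫ y in X, β y * p y
  have hB : B = ∫ x in X, (p x + g x * B - q x) :=
    setIntegral_congr_fun hX fun x hx => by linear_combination hcons x hx
  rw [integral_sub (f := fun x => p x + g x * B) (hp.add (hg.mul_const B)) hq,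
    integral_add hp (hg.mul_const B), integral_mul_const, hg1] at hB
  linarith

theorem exists_pos_beta_le (heq : IsEquilibrium X p g α γ c W β q) (hX : MeasurableSet X)
    (hp : IntegrableOn p X) (hp0 : ∀ x ∈ X, 0 ≤ p x) (hg : IntegrableOn g X)
    (hg0 : ∀ x ∈ X, 0 ≤ g x) (hg1 : ∫ x in X, g x = 1) (hq : IntegrableOn q X)
    (hAI : 0 < volume {x ∈ X | UtilW p α γ c W q x < RevWg X p g α γ W q}) :
    ∃ y ∈ X, 0 < β y ∧ q y ≤ p y := by
  have ⟨hβ, _, _, hβAI, _⟩ := heq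
  by_contra! h
  have hle : ∀ x ∈ X, 0 ≤ q x - p x := fun x hx => by
    rcases (hβ x hx).1.eq_or_lt with h0 | h0
    · exact sub_nonneg.mpr (heq.le_of_beta_eq_zero hX hp0 hg0 hx h0.symm)
    · exact sub_nonneg.mpr (h x hx h0).le
  have hae : (fun x => q x - p x) =ᵐ[volume.restrict X] 0 := by
    refine (setIntegral_eq_zero_iff_of_nonneg_ae (ae_restrict_of_forall_mem hX hle)
      (hq.sub hp)).mp ?_
    rw [integral_sub hq hp, heq.setIntegral_eq hX hp hg hg1 hq, sub_self]
  refine hAI.ne' ((measure_sep_eq_zero_iff_ae_restrict hX).mpr ?_)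
  filter_upwards [hae, ae_restrict_mem hX] with x hx hxX hAIx
  have := h x hxX (by rw [hβAI x hxX hAIx]; exact one_pos)
  simp only [Pi.zero_apply] at hx
  linarith

end IsEquilibrium

theorem stmt8_general {d : ℕ} (X : Set (Fin d → ℝ))
    (hXc : IsCompact X)
    (p g : (Fin d → ℝ) → ℝ) (hp : p ∈ PSet X) (hg : g ∈ PSet X)
    (α γ c : ℝ) (hα : α ∈ Ioo (0 : ℝ) 1) (hγ : γ ∈ Icc (0 : ℝ) 1) (hc : 0 < c)
    (v w : ℝ) (hw : 0 ≤ w)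
    (β q : (Fin d → ℝ) → ℝ)
    (heq : IsEquilibrium X p g α γ c (Wthr p α γ v w) β q) :
    {x ∈ X | RevWg X p g α γ (Wthr p α γ v w) q <
      UtilW p α γ c (Wthr p α γ v w) q x} = ∅ ∧
    0 < volume {x ∈ X | UtilW p α γ c (Wthr p α γ v w) q x <
      RevWg X p g α γ (Wthr p α γ v w) q} := by
  have ⟨_, hqD, hH, _⟩ := heq
  have hXm := hXc.isClosed.measurableSet
  have hp0 : ∀ x ∈ X, 0 ≤ p x := fun x hx => (pos_of_mem_DSet hp.1 hx).le
  have hg0 : ∀ x ∈ X, 0 ≤ g x := fun x hx => (pos_of_mem_DSet hg.1 hx).le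
  have hgi := integrableOn_of_mem_DSet hXc hg.1
  have hAI : 0 < volume {x ∈ X | UtilW p α γ c (Wthr p α γ v w) q x <
      RevWg X p g α γ (Wthr p α γ v w) q} :=
    measure_sep_sub_lt_integral_mul_pos hXm hg0 hgi hg.2
      (integrableOn_RevW_Wthr_mul hXc hp.1 hqD hgi hα.1.le) hc
  refine ⟨eq_empty_of_forall_notMem ?_, hAI⟩
  rintro x ⟨hx, hxH⟩
  obtain ⟨y, hy, hβy, hqy⟩ := heq.exists_pos_beta_le hXm (integrableOn_of_mem_DSet hXc hp.1) hp0
    hgi hg0 hg.2 (integrableOn_of_mem_DSet hXc hqD) hAI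
  have hpqx : p x ≤ q x := heq.le_of_beta_eq_zero hXm hp0 hg0 hx (hH x hx hxH)
  have hqx := (pos_of_mem_DSet hqD hx).le
  have hratio : p x / q x ≤ p y / q y :=
    (div_le_one_of_le₀ hpqx hqx).trans
      ((one_le_div (pos_of_mem_DSet hqD hy)).mpr hqy)
  have hxy : UtilW p α γ c (Wthr p α γ v w) q x ≤ UtilW p α γ c (Wthr p α γ v w) q y :=
    sub_le_sub_right (RevW_Wthr_le_of_Rev_le hw
      (Rev_le_Rev_of_div_le hα.1.le hγ.2 (div_nonneg (hp0 x hx) hqx) hratio)) c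
  have hyH : UtilW p α γ c (Wthr p α γ v w) q y ≤ RevWg X p g α γ (Wthr p α γ v w) q :=
    not_lt.mp fun h => hβy.ne' (hH y hy h)
  exact hxH.not_ge (hxy.trans hyH)

/-- Lemma 5: no creator strictly prefers manual creation; a
positive-measure set strictly prefers GenAI. -/
theorem stmt8 {d : ℕ} (hd : 1 ≤ d) (X : Set (Fin d → ℝ))
    (hXc : IsCompact X) (hX0 : 0 < volume X)
    (p g : (Fin d → ℝ) → ℝ) (hp : p ∈ PSet X) (hg : g ∈ PSet X)
    (α γ c : ℝ) (hα : α ∈ Ioo (0 : ℝ) 1) (hγ : γ ∈ Icc (0 : ℝ) 1) (hc : 0 < c)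
    (v w : ℝ) (hv : 0 ≤ v) (hw : 0 ≤ w)
    (β q : (Fin d → ℝ) → ℝ)
    (heq : IsEquilibrium X p g α γ c (Wthr p α γ v w) β q) :
    {x ∈ X | RevWg X p g α γ (Wthr p α γ v w) q <
      UtilW p α γ c (Wthr p α γ v w) q x} = ∅ ∧
    0 < volume {x ∈ X | UtilW p α γ c (Wthr p α γ v w) q x <
      RevWg X p g α γ (Wthr p α γ v w) q} :=
  stmt8_general X hXc p g hp hg α γ c hα hγ hc v w hw β q heq

end GenAIPlatform
end
end

section
/- Suppose g ≠ p (as elements of P(X)). Then for every v̄, w ≥ 0, there exists no equilibrium (β, q) with GenAI available under the revenue-threshold compensation scheme (v̄, w) whose content distribution satisfies q = p. -/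
open MeasureTheory Real Set Filter Topology
open scoped ENNReal

noncomputable section

namespace GenAIPlatform

/-- Lemma 6, "AI-slop": no equilibrium with `q = p` when `g ≠ p`. -/
theorem stmt9 {d : ℕ} (hd : 1 ≤ d) (X : Set (Fin d → ℝ))
    (hXc : IsCompact X) (hX0 : 0 < volume X)
    (p g : (Fin d → ℝ) → ℝ) (hp : p ∈ PSet X) (hg : g ∈ PSet X)
    (α γ c : ℝ) (hα : α ∈ Ioo (0 : ℝ) 1) (hγ : γ ∈ Icc (0 : ℝ) 1) (hc : 0 < c)
    (hne : ¬ Set.EqOn g p X)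
    (v w : ℝ) (hv : 0 ≤ v) (hw : 0 ≤ w) :
    ¬ ∃ β q : (Fin d → ℝ) → ℝ,
        IsEquilibrium X p g α γ c (Wthr p α γ v w) β q ∧ Set.EqOn q p X := by
  rintro ⟨β, q, ⟨hβ, hqD, h0, h1, hcons⟩, hqp⟩
  obtain ⟨⟨_, ε, hε, hεp⟩, hpint⟩ := hp
  obtain ⟨_, hgint⟩ := hg
  set W := Wthr (d := d) p α γ v w
  set K : ℝ := (1 - γ) + (if v ≤ 1 - γ then w else 0) with hK
  -- On X the compensated revenue is the constant K
  have hRev : ∀ y ∈ X, Rev p α γ q y = 1 - γ := by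
    intro y hy
    have hpy : p y ≠ 0 := ne_of_gt (lt_of_lt_of_le hε (hεp y hy))
    simp [Rev, hqp hy, div_self hpy, Real.one_rpow]
  have hRevW : ∀ y ∈ X, RevW p α γ W q y = K := by
    intro y hy
    simp [RevW, W, Wthr, hRev y hy, hK]
  -- Expected compensated revenue from GenAI equals K
  have hXm : MeasurableSet X := hXc.measurableSet
  have hRevWg : RevWg X p g α γ W q = K := by
    have : ∫ y in X, RevW p α γ W q y * g y = ∫ y in X, K * g y := by
      refine setIntegral_congr_fun hXm (fun y hy => ?_)
      simp [hRevW y hy]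
    rw [RevWg, this, integral_const_mul, hgint, mul_one]
  -- So everyone prefers GenAI: β = 1 on X
  have hβ1 : ∀ x ∈ X, β x = 1 := by
    intro x hx
    refine h1 x hx ?_
    rw [hRevWg, UtilW, hRevW x hx]
    linarith
  -- The integral of β * p over X equals 1
  have hI : (∫ y in X, β y * p y) = 1 := by
    have : ∫ y in X, β y * p y = ∫ y in X, p y := by
      refine setIntegral_congr_fun hXm (fun y hy => ?_)
      simp [hβ1 y hy]
    rw [this, hpint]
  -- Consistency forces p = g on X
  refine hne (fun x hx => ?_)
  have := hcons x hx
  rw [hqp hx, hβ1 x hx, hI] at this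
  simpa using this.symm

end GenAIPlatform
end
end

section
/- Suppose the pushforward of the measure p(x)dx under r(x) := p(x)/g(x) is compactly supported inside (0,∞) and is the sum of an absolutely continuous measure and finitely many atoms, and let r̄̄ := sup_{x∈X} r(x). If v̄₁ ≤ Ṽ^{v̄₁}(g) + c for some v̄₁ ∈ (1−γ, (1−γ)·r̄̄^α), then the function v̄ ↦ Ṽ^{v̄}(g) + c is monotonically decreasing on (1−γ, v̄₁]. In particular, there exists at most one solution v̄₀ ∈ (1−γ, (1−γ)·r̄̄^α) of the equation v̄ = Ṽ^{v̄}(g) + c. -/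
open MeasureTheory Real Set Filter Topology
open scoped ENNReal

noncomputable section

namespace GenAIPlatform

/-- `M_g(v̄)` where `t` stands for the threshold `r̄(v̄)`. -/
def Mgv {d : ℕ} (X : Set (Fin d → ℝ)) (p g : (Fin d → ℝ) → ℝ) (α : ℝ) (t : ℝ) : ℝ :=
  ∫ y in {y ∈ X | p y / g y < t}, p y ^ α * g y ^ (1 - α)

/-- `M_p(v̄)` where `t` stands for the threshold `r̄(v̄)`. -/
def Mpv {d : ℕ} (X : Set (Fin d → ℝ)) (p g : (Fin d → ℝ) → ℝ) (α γ v t : ℝ) : ℝ :=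
  ((1 - γ) / v) ^ (1 / α) * ∫ y in {y ∈ X | t ≤ p y / g y}, p y

/-- `Ṽ^{v̄}(g)` where `t` stands for the threshold `r̄(v̄)`. -/
def Vtilde {d : ℕ} (X : Set (Fin d → ℝ)) (p g : (Fin d → ℝ) → ℝ)
    (α γ c v t : ℝ) : ℝ :=
  t / (1 - Mpv X p g α γ v t) * ((1 - γ) / v) ^ (1 / α) *
    ((1 - γ) * Mgv X p g α t / t ^ α + c) - c

/-- `rbar` satisfies the defining equation of `r̄(v̄)`:
`∫_X max{r̄(v̄)/r(y), 1} p(y) dy = (v̄/(1-γ))^{1/α}` with `r̄(v̄) ≥ inf r`. -/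
def IsRbar {d : ℕ} (X : Set (Fin d → ℝ)) (p g : (Fin d → ℝ) → ℝ) (α γ : ℝ)
    (rbar : ℝ → ℝ) : Prop :=
  ∀ v, 1 - γ ≤ v → sInf ((fun x => p x / g x) '' X) ≤ rbar v ∧
    (∫ y in X, max (rbar v / (p y / g y)) 1 * p y) = (v / (1 - γ)) ^ (1 / α)

/-- The candidate equilibrium content density of Proposition 5,
with `t` standing for `r̄(v̄)`. -/
def eqQ {d : ℕ} (p g : (Fin d → ℝ) → ℝ) (γ α v t : ℝ) : (Fin d → ℝ) → ℝ :=
  fun x => if t ≤ p x / g x then ((1 - γ) / v) ^ (1 / α) * p x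
           else ((1 - γ) / v) ^ (1 / α) * t * g x

/-- The candidate equilibrium GenAI propensity of Proposition 5,
with `t` standing for `r̄(v̄)`. -/
def eqBeta {d : ℕ} (p g : (Fin d → ℝ) → ℝ) (γ α v t : ℝ) : (Fin d → ℝ) → ℝ :=
  fun x => if t ≤ p x / g x then 1 - ((1 - γ) / v) ^ (1 / α) * (1 - t / (p x / g x))
           else 1

/-- The pushforward of the measure `p(x)dx` on `X` under `r(x) := p(x)/g(x)`. -/
def pushR {d : ℕ} (X : Set (Fin d → ℝ)) (p g : (Fin d → ℝ) → ℝ) : Measure ℝ :=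
  Measure.map (fun x => p x / g x)
    ((volume.restrict X).withDensity fun x => ENNReal.ofReal (p x))



variable {d : ℕ} {X : Set (Fin d → ℝ)} {q : (Fin d → ℝ) → ℝ}

lemma usc_sublevel (hq : UpperSemicontinuousOn q X) (a : ℝ) :
    ∃ U : Set (Fin d → ℝ), IsOpen U ∧ {x | x ∈ X ∧ q x < a} = X ∩ U := by
  have h : ∀ x ∈ {x | x ∈ X ∧ q x < a},
      ∃ V : Set (Fin d → ℝ), IsOpen V ∧ x ∈ V ∧ ∀ z ∈ V ∩ X, q z < a := by
    rintro x ⟨hxX, hxa⟩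
    have h1 : ∀ᶠ z in 𝓝[X] x, q z < a := hq x hxX a hxa
    rw [eventually_nhdsWithin_iff] at h1
    rcases eventually_nhds_iff.1 h1 with ⟨V, hV1, hV2, hV3⟩
    exact ⟨V, hV2, hV3, fun z hz => hV1 z hz.1 hz.2⟩
  choose! V hVo hVx hVlt using h
  refine ⟨⋃ x ∈ {x | x ∈ X ∧ q x < a}, V x, isOpen_biUnion hVo, ?_⟩
  ext z
  constructor
  · intro hz
    exact ⟨hz.1, mem_biUnion hz (hVx z hz)⟩
  · rintro ⟨hzX, hzU⟩
    rcases mem_iUnion₂.1 hzU with ⟨x, hx, hzV⟩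
    exact ⟨hzX, hVlt x hx z ⟨hzV, hzX⟩⟩

lemma usc_aemeasurable (hXm : MeasurableSet X) (hq : UpperSemicontinuousOn q X) :
    AEMeasurable q (volume.restrict X) := by
  classical
  set q' : (Fin d → ℝ) → ℝ := fun x => if x ∈ X then q x else 0 with hq'
  have hm : Measurable q' := by
    apply measurable_of_Iio
    intro a
    obtain ⟨U, hUo, hU⟩ := usc_sublevel hq a
    have : q' ⁻¹' Iio a = (X ∩ U) ∪ (Xᶜ ∩ {_x : Fin d → ℝ | (0:ℝ) < a}) := by
      rw [← hU]
      ext x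
      simp only [mem_preimage, mem_Iio, hq', mem_union, mem_inter_iff, mem_compl_iff,
        mem_setOf_eq]
      by_cases hx : x ∈ X <;> simp [hx]
    rw [this]
    exact ((hXm.inter hUo.measurableSet).union
      (hXm.compl.inter (MeasurableSet.const _)))
  refine ⟨q', hm, ?_⟩
  filter_upwards [ae_restrict_mem hXm] with x hx
  simp [hq', hx]

lemma usc_bddAbove (hXc : IsCompact X) (hq : UpperSemicontinuousOn q X) :
    ∃ B : ℝ, ∀ x ∈ X, q x ≤ B := by
  have h : ∀ x : X, ∃ V : Set (Fin d → ℝ), IsOpen V ∧ (x : Fin d → ℝ) ∈ V ∧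
      ∀ z ∈ V ∩ X, q z < q x + 1 := by
    rintro ⟨x, hxX⟩
    have h1 : ∀ᶠ z in 𝓝[X] x, q z < q x + 1 := hq x hxX _ (by linarith)
    rw [eventually_nhdsWithin_iff] at h1
    rcases eventually_nhds_iff.1 h1 with ⟨V, hV1, hV2, hV3⟩
    exact ⟨V, hV2, hV3, fun z hz => hV1 z hz.1 hz.2⟩
  choose V hVo hVx hVlt using h
  obtain ⟨t, ht⟩ := hXc.elim_finite_subcover V hVo
    (fun x hx => mem_iUnion.2 ⟨⟨x, hx⟩, hVx ⟨x, hx⟩⟩)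
  rcases t.eq_empty_or_nonempty with rfl | htne
  · refine ⟨0, fun x hx => ?_⟩
    have := ht hx
    simp at this
  · refine ⟨t.sup' htne (fun i : X => q (i : Fin d → ℝ) + 1), fun x hx => ?_⟩
    rcases mem_iUnion₂.1 (ht hx) with ⟨i, hi, hxV⟩
    exact le_trans (le_of_lt (hVlt i x ⟨hxV, hx⟩))
      (Finset.le_sup' (fun i : X => q (i : Fin d → ℝ) + 1) hi)

/-- The set `{r < t}`. -/
def Av {d : ℕ} (p g : (Fin d → ℝ) → ℝ) (t : ℝ) : Set (Fin d → ℝ) := {y | p y / g y < t}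
/-- `∫_{r<t} g dμ` with `μ = volume.restrict X`. -/
def Igf {d : ℕ} (X : Set (Fin d → ℝ)) (p g : (Fin d → ℝ) → ℝ) (t : ℝ) : ℝ :=
  ∫ y in Av p g t, g y ∂(volume.restrict X)
/-- `∫_{r<t} p^α g^{1-α} dμ`. -/
def Agf {d : ℕ} (X : Set (Fin d → ℝ)) (p g : (Fin d → ℝ) → ℝ) (α t : ℝ) : ℝ :=
  ∫ y in Av p g t, p y ^ α * g y ^ (1 - α) ∂(volume.restrict X)

lemma base {d : ℕ} {X : Set (Fin d → ℝ)} (hXc : IsCompact X) (hX0 : 0 < volume X)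
    {p g : (Fin d → ℝ) → ℝ} (hp : p ∈ PSet X) (hg : g ∈ PSet X)
    {α : ℝ} (hα : α ∈ Ioo (0:ℝ) 1) :
    X.Nonempty ∧ (∀ x ∈ X, 0 < p x) ∧ (∀ x ∈ X, 0 < g x) ∧
    (∀ y ∈ X, p y ^ α * g y ^ (1 - α) = g y * (p y / g y) ^ α) ∧
    AEMeasurable p (volume.restrict X) ∧ AEMeasurable g (volume.restrict X) ∧
    Integrable p (volume.restrict X) ∧ Integrable g (volume.restrict X) ∧
    Integrable (fun y => p y ^ α * g y ^ (1 - α)) (volume.restrict X) ∧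
    (∃ a0 : ℝ, 0 < a0 ∧ ∀ x ∈ X, a0 ≤ p x / g x) := by
  have hXm : MeasurableSet X := hXc.measurableSet
  have hXne : X.Nonempty := nonempty_of_measure_ne_zero hX0.ne'
  obtain ⟨hpUSC, εp, hεp, hpl⟩ := hp.1
  obtain ⟨hgUSC, εg, hεg, hgl⟩ := hg.1
  have hppos : ∀ x ∈ X, 0 < p x := fun x hx => lt_of_lt_of_le hεp (hpl x hx)
  have hgpos : ∀ x ∈ X, 0 < g x := fun x hx => lt_of_lt_of_le hεg (hgl x hx)
  have hpg_eq : ∀ y ∈ X, p y ^ α * g y ^ (1 - α) = g y * (p y / g y) ^ α := by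
    intro y hy
    have hpy := hppos y hy
    have hgy := hgpos y hy
    rw [Real.div_rpow hpy.le hgy.le, Real.rpow_sub hgy, Real.rpow_one]
    have hgα : (0:ℝ) < g y ^ α := Real.rpow_pos_of_pos hgy α
    field_simp
  have pm : AEMeasurable p (volume.restrict X) := usc_aemeasurable hXm hpUSC
  have gm : AEMeasurable g (volume.restrict X) := usc_aemeasurable hXm hgUSC
  have hIp : Integrable p (volume.restrict X) := by
    by_contra h
    have := hp.2
    rw [integral_undef h] at this
    norm_num at this
  have hIg : Integrable g (volume.restrict X) := by
    by_contra h
    have := hg.2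
    rw [integral_undef h] at this
    norm_num at this
  obtain ⟨Bp, hBp⟩ := usc_bddAbove hXc hpUSC
  obtain ⟨Bg, hBg⟩ := usc_bddAbove hXc hgUSC
  have hr_ub : ∀ x ∈ X, p x / g x ≤ Bp / εg := fun x hx =>
    div_le_div₀ (le_trans (hppos hXne.some hXne.some_mem).le (hBp _ hXne.some_mem))
      (hBp x hx) hεg (hgl x hx)
  have hBpεg : (0:ℝ) ≤ Bp / εg :=
    le_trans (le_of_lt (div_pos (hppos _ hXne.some_mem) hεg))
      (div_le_div₀ (le_trans (hppos hXne.some hXne.some_mem).le (hBp _ hXne.some_mem))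
        (hBp _ hXne.some_mem) hεg (le_refl εg))
  have Ipg : Integrable (fun y => p y ^ α * g y ^ (1 - α)) (volume.restrict X) := by
    have hmeas : AEMeasurable (fun y => p y ^ α * g y ^ (1 - α)) (volume.restrict X) := by
      have h1 : AEMeasurable (fun y => p y ^ α) (volume.restrict X) :=
        (Real.continuous_rpow_const hα.1.le).measurable.comp_aemeasurable pm
      have h2 : AEMeasurable (fun y => g y ^ (1 - α)) (volume.restrict X) :=
        (Real.continuous_rpow_const (by linarith [hα.2] : (0:ℝ) ≤ 1 - α)).measurable.comp_aemeasurable gm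
      exact h1.mul h2
    refine Integrable.mono' (hIg.const_mul ((Bp / εg) ^ α)) hmeas.aestronglyMeasurable ?_
    filter_upwards [ae_restrict_mem hXm] with y hy
    have hgy := hgpos y hy
    have hpy := hppos y hy
    rw [Real.norm_eq_abs, abs_of_nonneg
      (mul_nonneg (Real.rpow_nonneg hpy.le α) (Real.rpow_nonneg hgy.le (1-α)))]
    rw [hpg_eq y hy]
    calc g y * (p y / g y) ^ α ≤ g y * (Bp / εg) ^ α := by
          refine mul_le_mul_of_nonneg_left ?_ hgy.le
          exact Real.rpow_le_rpow (div_nonneg hpy.le hgy.le) (hr_ub y hy) hα.1.le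
      _ = (Bp / εg) ^ α * g y := mul_comm _ _
  refine ⟨hXne, hppos, hgpos, hpg_eq, pm, gm, hIp, hIg, Ipg, ?_⟩
  have hBg0 : (0:ℝ) < Bg := lt_of_lt_of_le (hgpos _ hXne.some_mem) (hBg _ hXne.some_mem)
  refine ⟨εp / Bg, div_pos hεp hBg0, fun x hx => ?_⟩
  exact div_le_div₀ (hppos x hx).le (hpl x hx) (hgpos x hx) (hBg x hx)


lemma core {d : ℕ} {X : Set (Fin d → ℝ)} (hXc : IsCompact X) (hX0 : 0 < volume X)
    {p g : (Fin d → ℝ) → ℝ} (hp : p ∈ PSet X) (hg : g ∈ PSet X)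
    {α γ : ℝ} (c : ℝ) (hα : α ∈ Ioo (0:ℝ) 1) (h1γ : 0 < 1 - γ)
    {rbar : ℝ → ℝ} (hrbar : IsRbar X p g α γ rbar)
    {v : ℝ} (hv : 1 - γ < v) :
    0 < rbar v ∧ 0 < Igf X p g (rbar v) ∧ 0 ≤ Agf X p g α (rbar v) ∧
    Vtilde X p g α γ c v (rbar v) + c
      = (c + (1 - γ) * Agf X p g α (rbar v) / (rbar v) ^ α) / Igf X p g (rbar v) := by
  obtain ⟨hXne, hppos, hgpos, hpg_eq, pm, gm, hIp, hIg, Ipg, a0, ha0, hr_lb⟩ :=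
    base hXc hX0 hp hg hα
  have hXm : MeasurableSet X := hXc.measurableSet
  obtain ⟨hts, heq⟩ := hrbar v hv.le
  set t := rbar v with htdef
  -- positivity of t
  have ht0 : 0 < t := by
    refine lt_of_lt_of_le ha0 (le_trans ?_ hts)
    exact le_csInf (hXne.image _) (by rintro b ⟨x, hx, rfl⟩; exact hr_lb x hx)
  have hv0 : 0 < v := lt_trans h1γ hv
  have hφpos : 0 < (v / (1 - γ)) ^ (1/α) :=
    Real.rpow_pos_of_pos (div_pos hv0 h1γ) _
  have hφ1 : 1 < (v / (1 - γ)) ^ (1/α) := by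
    rw [Real.one_lt_rpow_iff_of_pos (div_pos hv0 h1γ)]
    exact Or.inl ⟨(one_lt_div h1γ).2 hv, one_div_pos.2 hα.1⟩
  -- null-measurability
  have rm : AEMeasurable (fun y => p y / g y) (volume.restrict X) := pm.div gm
  have hAnm : NullMeasurableSet (Av p g t) (volume.restrict X) :=
    nullMeasurableSet_lt rm aemeasurable_const
  -- integrability of the max integrand
  have Imax : Integrable (fun y => max (t / (p y / g y)) 1 * p y) (volume.restrict X) := by
    by_contra h
    rw [integral_undef h] at heq
    linarith
  -- ae facts
  have haeX : ∀ᵐ y ∂(volume.restrict X), y ∈ X := ae_restrict_mem hXm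
  have hp0ae : ∀ᵐ y ∂(volume.restrict X), 0 ≤ p y := by
    filter_upwards [haeX] with y hy; exact (hppos y hy).le
  have hg0ae : ∀ᵐ y ∂(volume.restrict X), 0 ≤ g y := by
    filter_upwards [haeX] with y hy; exact (hgpos y hy).le
  -- split the rbar equation
  have hsplit1 : (∫ y in Av p g t, max (t / (p y / g y)) 1 * p y ∂(volume.restrict X))
      + (∫ y in (Av p g t)ᶜ, max (t / (p y / g y)) 1 * p y ∂(volume.restrict X))
      = (v / (1 - γ)) ^ (1/α) := by
    rw [integral_add_compl₀ hAnm Imax]; exact heq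
  have hA_eq : (∫ y in Av p g t, max (t / (p y / g y)) 1 * p y ∂(volume.restrict X))
      = t * Igf X p g t := by
    rw [show t * Igf X p g t = ∫ y in Av p g t, t * g y ∂(volume.restrict X) from (integral_const_mul t g).symm]
    refine setIntegral_congr_ae₀ hAnm ?_
    filter_upwards [haeX] with y hy hyA
    have hgy := hgpos y hy
    have hpy := hppos y hy
    have hr0 : 0 < p y / g y := div_pos hpy hgy
    have hmx : max (t / (p y / g y)) 1 = t / (p y / g y) :=
      max_eq_left ((one_le_div hr0).2 (le_of_lt hyA))
    rw [hmx]
    field_simp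
  have hAc_eq : (∫ y in (Av p g t)ᶜ, max (t / (p y / g y)) 1 * p y ∂(volume.restrict X))
      = ∫ y in (Av p g t)ᶜ, p y ∂(volume.restrict X) := by
    refine setIntegral_congr_ae₀ hAnm.compl ?_
    filter_upwards [haeX] with y hy hyA
    have hgy := hgpos y hy
    have hpy := hppos y hy
    have hr0 : 0 < p y / g y := div_pos hpy hgy
    have hrt : t ≤ p y / g y := not_lt.1 hyA
    rw [max_eq_right ((div_le_one hr0).2 hrt), one_mul]
  set Pp : ℝ := ∫ y in (Av p g t)ᶜ, p y ∂(volume.restrict X) with hPp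
  have hkey1 : t * Igf X p g t + Pp = (v / (1 - γ)) ^ (1/α) := by
    rw [← hA_eq, ← hAc_eq]; exact hsplit1
  have hsplit2 : (∫ y in Av p g t, p y ∂(volume.restrict X)) + Pp = 1 := by
    rw [hPp, integral_add_compl₀ hAnm hIp]; exact hp.2
  have hPA0 : 0 ≤ ∫ y in Av p g t, p y ∂(volume.restrict X) :=
    integral_nonneg_of_ae (ae_restrict_of_ae hp0ae)
  have hPple : Pp ≤ 1 := by linarith
  have htIg : 0 < t * Igf X p g t := by linarith
  have hIg0 : 0 < Igf X p g t := by nlinarith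
  have hAg0 : 0 ≤ Agf X p g α t := by
    refine integral_nonneg_of_ae (ae_restrict_of_ae ?_)
    filter_upwards [haeX] with y hy
    exact mul_nonneg (Real.rpow_nonneg (hppos y hy).le α)
      (Real.rpow_nonneg (hgpos y hy).le (1 - α))
  refine ⟨ht0, hIg0, hAg0, ?_⟩
  -- identify the statement's integrals with the μ-integrals
  have hsetp : {y ∈ X | t ≤ p y / g y} = (Av p g t)ᶜ ∩ X := by
    ext y
    simp only [Av, mem_setOf_eq, mem_inter_iff, mem_compl_iff, not_lt, mem_sep_iff]
    tauto
  have hsetg : {y ∈ X | p y / g y < t} = Av p g t ∩ X := by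
    ext y
    simp only [Av, mem_setOf_eq, mem_inter_iff, mem_sep_iff]
    tauto
  have hMp : Mpv X p g α γ v t = ((v / (1 - γ)) ^ (1/α))⁻¹ * Pp := by
    rw [Mpv, hsetp, ← Measure.restrict_restrict₀ (hAnm.compl),
      show (1 - γ) / v = (v / (1 - γ))⁻¹ by rw [inv_div],
      Real.inv_rpow (div_pos hv0 h1γ).le]
  have hMg : Mgv X p g α t = Agf X p g α t := by
    rw [Mgv, hsetg, ← Measure.restrict_restrict₀ hAnm, Agf]
  rw [Vtilde, hMp, hMg]
  rw [show (1 - γ) / v = (v / (1 - γ))⁻¹ by rw [inv_div],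
    Real.inv_rpow (div_pos hv0 h1γ).le]
  set φ : ℝ := (v / (1 - γ)) ^ (1/α) with hφ
  have h1M : 1 - φ⁻¹ * Pp = t * Igf X p g t / φ := by
    field_simp
    linarith
  rw [h1M]
  have htα : (0:ℝ) < t ^ α := Real.rpow_pos_of_pos ht0 α
  field_simp
  ring


lemma pair {d : ℕ} {X : Set (Fin d → ℝ)} (hXc : IsCompact X) (hX0 : 0 < volume X)
    {p g : (Fin d → ℝ) → ℝ} (hp : p ∈ PSet X) (hg : g ∈ PSet X)
    {α γ : ℝ} (hα : α ∈ Ioo (0:ℝ) 1) (h1γ : 0 < 1 - γ)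
    {rbar : ℝ → ℝ} (hrbar : IsRbar X p g α γ rbar)
    {v v' : ℝ} (hv : 1 - γ < v) (hvv : v ≤ v') :
    rbar v ≤ rbar v' ∧ Igf X p g (rbar v) ≤ Igf X p g (rbar v') ∧
    Agf X p g α (rbar v') ≤ Agf X p g α (rbar v)
      + (rbar v') ^ α * (Igf X p g (rbar v') - Igf X p g (rbar v)) := by
  obtain ⟨hXne, hppos, hgpos, hpg_eq, pm, gm, hIp, hIg, Ipg, a0, ha0, hr_lb⟩ :=
    base hXc hX0 hp hg hα
  have hXm : MeasurableSet X := hXc.measurableSet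
  have hv' : 1 - γ < v' := lt_of_lt_of_le hv hvv
  have hv0 : 0 < v := lt_trans h1γ hv
  obtain ⟨hts, heq⟩ := hrbar v hv.le
  obtain ⟨hts', heq'⟩ := hrbar v' hv'.le
  set t := rbar v with htdef
  set t' := rbar v' with ht'def
  have haeX : ∀ᵐ y ∂(volume.restrict X), y ∈ X := ae_restrict_mem hXm
  have hg0ae : ∀ᵐ y ∂(volume.restrict X), 0 ≤ g y := by
    filter_upwards [haeX] with y hy; exact (hgpos y hy).le
  have Imax : Integrable (fun y => max (t / (p y / g y)) 1 * p y) (volume.restrict X) := by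
    by_contra h
    rw [integral_undef h] at heq
    have : (0:ℝ) < (v / (1 - γ)) ^ (1/α) := Real.rpow_pos_of_pos (div_pos hv0 h1γ) _
    linarith
  -- monotonicity of rbar
  have htt : t ≤ t' := by
    rcases eq_or_lt_of_le hvv with rfl | hlt
    · exact le_refl _
    by_contra hcon
    push_neg at hcon
    have hmono : (∫ y in X, max (t' / (p y / g y)) 1 * p y)
        ≤ ∫ y in X, max (t / (p y / g y)) 1 * p y := by
      refine integral_mono_of_nonneg ?_ Imax ?_
      · filter_upwards [haeX] with y hy
        exact mul_nonneg (le_trans zero_le_one (le_max_right _ _)) (hppos y hy).le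
      · filter_upwards [haeX] with y hy
        have hr0 : 0 < p y / g y := div_pos (hppos y hy) (hgpos y hy)
        refine mul_le_mul_of_nonneg_right (max_le_max ?_ (le_refl 1)) (hppos y hy).le
        exact (div_le_div_iff_of_pos_right hr0).2 hcon.le
    rw [heq, heq'] at hmono
    have hφlt : (v / (1 - γ)) ^ (1/α) < (v' / (1 - γ)) ^ (1/α) := by
      refine Real.rpow_lt_rpow (div_nonneg hv0.le h1γ.le) ?_ (one_div_pos.2 hα.1)
      exact (div_lt_div_iff_of_pos_right h1γ).2 hlt
    linarith
  -- the difference set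
  set D : Set (Fin d → ℝ) := {y | t ≤ p y / g y} ∩ Av p g t' with hDdef
  have rm : AEMeasurable (fun y => p y / g y) (volume.restrict X) := pm.div gm
  have hAnm : NullMeasurableSet (Av p g t) (volume.restrict X) :=
    nullMeasurableSet_lt rm aemeasurable_const
  have hDnm : NullMeasurableSet D (volume.restrict X) :=
    (nullMeasurableSet_le aemeasurable_const rm).inter
      (nullMeasurableSet_lt rm aemeasurable_const)
  have hunion : Av p g t' = Av p g t ∪ D := by
    ext y
    simp only [Av, hDdef, mem_union, mem_inter_iff, mem_setOf_eq]
    constructor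
    · intro h
      rcases lt_or_ge (p y / g y) t with h1 | h1
      · exact Or.inl h1
      · exact Or.inr ⟨h1, h⟩
    · rintro (h | ⟨h1, h2⟩)
      · exact lt_of_lt_of_le h htt
      · exact h2
  have hdisj : Disjoint (Av p g t) D := by
    rw [Set.disjoint_left]
    rintro y hy ⟨h1, _⟩
    exact absurd (show p y / g y < t from hy) (not_lt.2 h1)
  have hIgsplit : Igf X p g t' = Igf X p g t + ∫ y in D, g y ∂(volume.restrict X) := by
    rw [Igf, hunion, integral_union_ae hdisj.aedisjoint hDnm
      hIg.integrableOn hIg.integrableOn]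
    rfl
  have hAgsplit : Agf X p g α t' = Agf X p g α t
      + ∫ y in D, p y ^ α * g y ^ (1 - α) ∂(volume.restrict X) := by
    rw [Agf, hunion, integral_union_ae hdisj.aedisjoint hDnm
      Ipg.integrableOn Ipg.integrableOn]
    rfl
  have hΔG0 : 0 ≤ ∫ y in D, g y ∂(volume.restrict X) :=
    integral_nonneg_of_ae (ae_restrict_of_ae hg0ae)
  have hΔA : (∫ y in D, p y ^ α * g y ^ (1 - α) ∂(volume.restrict X))
      ≤ ∫ y in D, t' ^ α * g y ∂(volume.restrict X) := by
    refine integral_mono_ae Ipg.integrableOn ((hIg.const_mul _).integrableOn) ?_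
    filter_upwards [ae_restrict_mem₀ hDnm, ae_restrict_of_ae haeX] with y hyD hyX
    have hgy := hgpos y hyX
    have hpy := hppos y hyX
    rw [hpg_eq y hyX]
    calc g y * (p y / g y) ^ α ≤ g y * t' ^ α := by
          refine mul_le_mul_of_nonneg_left ?_ hgy.le
          exact Real.rpow_le_rpow (div_nonneg hpy.le hgy.le) hyD.2.le hα.1.le
      _ = t' ^ α * g y := mul_comm _ _
  refine ⟨htt, by linarith, ?_⟩
  rw [hAgsplit, hIgsplit]
  have : (∫ y in D, t' ^ α * g y ∂(volume.restrict X))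
      = t' ^ α * ∫ y in D, g y ∂(volume.restrict X) := integral_const_mul _ _
  rw [this] at hΔA
  linarith


/-- Lemma 7, part 2: monotonicity of `Ṽ^{v̄}(g) + c` and uniqueness
of the indifference level `v̄₀`. -/
theorem stmt14 {d : ℕ} (hd : 1 ≤ d) (X : Set (Fin d → ℝ))
    (hXc : IsCompact X) (hX0 : 0 < volume X)
    (p g : (Fin d → ℝ) → ℝ) (hp : p ∈ PSet X) (hg : g ∈ PSet X)
    (α γ c : ℝ) (hα : α ∈ Ioo (0 : ℝ) 1) (hγ : γ ∈ Icc (0 : ℝ) 1) (hc : 0 < c)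
    (rbar : ℝ → ℝ) (hrbar : IsRbar X p g α γ rbar)
    (hsupp : ∃ a b : ℝ, 0 < a ∧ pushR X p g (Icc a b)ᶜ = 0)
    (hdecomp : ∃ (μac : Measure ℝ) (s : Finset ℝ) (m : ℝ → ℝ≥0∞),
      μac ≪ volume ∧ pushR X p g = μac + ∑ i ∈ s, m i • Measure.dirac i)
    (v1 : ℝ)
    (hv1 : v1 ∈ Ioo (1 - γ) ((1 - γ) * (sSup ((fun x => p x / g x) '' X)) ^ α))
    (hle : v1 ≤ Vtilde X p g α γ c v1 (rbar v1) + c) :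
    AntitoneOn (fun v => Vtilde X p g α γ c v (rbar v) + c) (Ioc (1 - γ) v1) ∧
    ∀ v0 ∈ Ioo (1 - γ) ((1 - γ) * (sSup ((fun x => p x / g x) '' X)) ^ α),
      ∀ v0' ∈ Ioo (1 - γ) ((1 - γ) * (sSup ((fun x => p x / g x) '' X)) ^ α),
        v0 = Vtilde X p g α γ c v0 (rbar v0) + c →
        v0' = Vtilde X p g α γ c v0' (rbar v0') + c → v0 = v0' := by

  have h1γ : 0 < 1 - γ := by
    rcases eq_or_lt_of_le (by linarith [hγ.2] : (0:ℝ) ≤ 1 - γ) with h | h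
    · exfalso
      have h2 := hv1.2
      have h1 := hv1.1
      rw [← h, zero_mul] at h2
      linarith
    · exact h
  -- N_{v'} ≤ N_v + (1-γ)ΔG for v ≤ v'
  have hNle : ∀ v v' : ℝ, 1 - γ < v → v ≤ v' →
      (1 - γ) * Agf X p g α (rbar v') / (rbar v') ^ α
        ≤ (1 - γ) * Agf X p g α (rbar v) / (rbar v) ^ α
          + (1 - γ) * (Igf X p g (rbar v') - Igf X p g (rbar v)) := by
    intro v v' hv hvv
    obtain ⟨htv0, hIgv, hAgv, -⟩ := core hXc hX0 hp hg c hα h1γ hrbar hv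
    obtain ⟨htv'0, hIgv', hAgv', -⟩ :=
      core hXc hX0 hp hg c hα h1γ hrbar (lt_of_lt_of_le hv hvv)
    obtain ⟨htt, hIgm, hAgle⟩ := pair hXc hX0 hp hg hα h1γ hrbar hv hvv
    have htα : (0:ℝ) < (rbar v) ^ α := Real.rpow_pos_of_pos htv0 α
    have htα' : (0:ℝ) < (rbar v') ^ α := Real.rpow_pos_of_pos htv'0 α
    have htαle : (rbar v) ^ α ≤ (rbar v') ^ α := Real.rpow_le_rpow htv0.le htt hα.1.le
    have h1 : Agf X p g α (rbar v') / (rbar v') ^ α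
        ≤ Agf X p g α (rbar v) / (rbar v') ^ α
          + (Igf X p g (rbar v') - Igf X p g (rbar v)) := by
      have h2 : Agf X p g α (rbar v') / (rbar v') ^ α
          ≤ (Agf X p g α (rbar v)
            + (rbar v') ^ α * (Igf X p g (rbar v') - Igf X p g (rbar v))) / (rbar v') ^ α :=
        (div_le_div_iff_of_pos_right htα').2 hAgle
      rwa [add_div, mul_div_cancel_left₀ _ htα'.ne'] at h2
    have h3 : Agf X p g α (rbar v) / (rbar v') ^ α
        ≤ Agf X p g α (rbar v) / (rbar v) ^ α :=
      div_le_div_of_nonneg_left hAgv htα htαle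
    rw [mul_div_assoc, mul_div_assoc]
    nlinarith [h1, h3]
  -- key antitone lemma
  have key : ∀ w : ℝ, 1 - γ < w → w ≤ Vtilde X p g α γ c w (rbar w) + c →
      AntitoneOn (fun v => Vtilde X p g α γ c v (rbar v) + c) (Ioc (1 - γ) w) := by
    intro w hw hwle
    obtain ⟨htw0, hIgw, hAgw, hVw⟩ := core hXc hX0 hp hg c hα h1γ hrbar hw
    have hstrict : ∀ v : ℝ, 1 - γ < v → v ≤ w →
        (1 - γ) * Igf X p g (rbar v)
          < c + (1 - γ) * Agf X p g α (rbar v) / (rbar v) ^ α := by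
      intro v hv hvw
      by_contra hcon
      push_neg at hcon
      obtain ⟨htv0, hIgv, hAgv, hVv⟩ := core hXc hX0 hp hg c hα h1γ hrbar hv
      have hNw := hNle v w hv hvw
      have hwge : w * Igf X p g (rbar w)
          ≤ c + (1 - γ) * Agf X p g α (rbar w) / (rbar w) ^ α := by
        rw [hVw] at hwle
        exact (le_div_iff₀ hIgw).1 hwle
      obtain ⟨-, hIgm, -⟩ := pair hXc hX0 hp hg hα h1γ hrbar hv hvw
      nlinarith [mul_lt_mul_of_pos_right hw hIgw]
    intro v hv v' hv' hvv'
    simp only []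
    obtain ⟨htv0, hIgv, hAgv, hVv⟩ := core hXc hX0 hp hg c hα h1γ hrbar hv.1
    obtain ⟨htv'0, hIgv', hAgv', hVv'⟩ := core hXc hX0 hp hg c hα h1γ hrbar hv'.1
    rw [hVv, hVv', div_le_div_iff₀ hIgv' hIgv]
    have hstr := hstrict v hv.1 hv.2
    have hN := hNle v v' hv.1 hvv'
    obtain ⟨-, hIgm, -⟩ := pair hXc hX0 hp hg hα h1γ hrbar hv.1 hvv'
    nlinarith [mul_le_mul_of_nonneg_right hstr.le (sub_nonneg.2 hIgm),
      mul_le_mul_of_nonneg_right hN hIgv.le]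
  refine ⟨key v1 hv1.1 hle, ?_⟩
  intro v0 h0 v0' h0' e0 e0'
  rcases le_total v0 v0' with h | h
  · have := key v0' h0'.1 (le_of_eq e0') ⟨h0.1, h⟩ ⟨h0'.1, le_refl _⟩ h
    simp only [] at this
    rw [← e0, ← e0'] at this
    exact le_antisymm h this
  · have := key v0 h0.1 (le_of_eq e0) ⟨h0'.1, h⟩ ⟨h0.1, le_refl _⟩ h
    simp only [] at this
    rw [← e0, ← e0'] at this
    exact le_antisymm this h


end GenAIPlatform
end
end

section
/- If (β ≡ 1, q = g) is an equilibrium with GenAI available under some revenue-threshold compensation scheme (v̄, w) with v̄, w ≥ 0, then (1−γ)·∫_X r(x)^α g(x)dx + c ≥ (1−γ)·sup_{x∈X} r(x)^α, where r(x) := p(x)/g(x). -/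
open MeasureTheory Real Set Filter Topology
open scoped ENNReal

noncomputable section

namespace GenAIPlatform

/-! When everybody uses GenAI, no creator strictly prefers manual creation, so
`(1 - γ) r(x)^α + W(x) - c ≤ V^W(g; g) ≤ (1 - γ) ∫ r^α g + w`. A creator at or above the revenue
threshold receives exactly `w`, which cancels; a creator below it earns less than one above it;
and if nobody reaches the threshold the scheme pays nothing and `V^W(g; g) = (1 - γ) ∫ r^α g`. -/

lemma le_add_of_threshold_response {ι : Type*} {s : Set ι} {f : ι → ℝ} {S B c v w : ℝ}
    (hresp : ∀ x ∈ s, f x + (if v ≤ f x then w else 0) - c ≤ S)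
    (hS : S ≤ B + w) (hS_below : (∀ x ∈ s, f x < v) → S ≤ B) :
    ∀ x ∈ s, f x ≤ B + c := by
  by_cases hreach : ∃ z ∈ s, v ≤ f z
  · have h_above : ∀ z ∈ s, v ≤ f z → f z ≤ B + c := fun z hz hvz => by
      have := hresp z hz
      rw [if_pos hvz] at this
      linarith
    obtain ⟨z, hz, hvz⟩ := hreach
    intro x hx
    by_cases hvx : v ≤ f x
    · exact h_above x hx hvx
    · linarith [h_above z hz hvz]
  · push Not at hreach
    intro x hx
    have := hresp x hx
    rw [if_neg (not_le.2 (hreach x hx))] at this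
    linarith [hS_below hreach]

lemma mul_sSup_image_le {ι : Type*} {s : Set ι} {f : ι → ℝ} {a b : ℝ} (ha : 0 ≤ a)
    (hb : 0 ≤ b) (h : ∀ x ∈ s, a * f x ≤ b) : a * sSup (f '' s) ≤ b := by
  rw [← smul_eq_mul, ← Real.sSup_smul_of_nonneg ha, ← image_smul, image_image]
  exact Real.sSup_le (forall_mem_image.2 h) hb

/-- This also holds when `(f + W) g` is not integrable, its integral being the junk value `0`. -/
lemma setIntegral_add_mul_le {α : Type*} [MeasurableSpace α] {μ : Measure α} {s : Set α}
    (hs : MeasurableSet s) {f W g : α → ℝ} {w : ℝ}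
    (hfg : AEStronglyMeasurable (fun x => f x * g x) (μ.restrict s))
    (hf : ∀ x ∈ s, 0 ≤ f x) (hW : ∀ x ∈ s, 0 ≤ W x ∧ W x ≤ w) (hw : 0 ≤ w)
    (hg : IntegrableOn g s μ) (hg0 : ∀ x ∈ s, 0 ≤ g x) :
    ∫ x in s, (f x + W x) * g x ∂μ ≤ ∫ x in s, f x * g x ∂μ + w * ∫ x in s, g x ∂μ := by
  by_cases hint : IntegrableOn (fun x => (f x + W x) * g x) s μ
  · have hfg_int : IntegrableOn (fun x => f x * g x) s μ := by
      refine hint.mono' hfg ((ae_restrict_iff' hs).2 (ae_of_all _ fun x hx => ?_))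
      rw [Real.norm_of_nonneg (mul_nonneg (hf x hx) (hg0 x hx))]
      exact mul_le_mul_of_nonneg_right (le_add_of_nonneg_right (hW x hx).1) (hg0 x hx)
    calc ∫ x in s, (f x + W x) * g x ∂μ ≤ ∫ x in s, (f x * g x + w * g x) ∂μ := by
          refine setIntegral_mono_on hint (hfg_int.add (hg.const_mul w)) hs fun x hx => ?_
          nlinarith [(hW x hx).2, hg0 x hx]
      _ = ∫ x in s, f x * g x ∂μ + w * ∫ x in s, g x ∂μ := by
          rw [integral_add hfg_int (hg.const_mul w), integral_const_mul]
  · rw [integral_undef hint]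
    exact add_nonneg (setIntegral_nonneg hs fun x hx => mul_nonneg (hf x hx) (hg0 x hx))
      (mul_nonneg hw (setIntegral_nonneg hs hg0))

lemma nonneg_of_mem_DSet {d : ℕ} {X : Set (Fin d → ℝ)} {q : (Fin d → ℝ) → ℝ} (hq : q ∈ DSet X) :
    ∀ x ∈ X, 0 ≤ q x :=
  fun x hx => hq.2.choose_spec.1.le.trans (hq.2.choose_spec.2 x hx)

lemma integrableOn_of_mem_PSet {d : ℕ} {X : Set (Fin d → ℝ)} {q : (Fin d → ℝ) → ℝ}
    (hq : q ∈ PSet X) : IntegrableOn q X :=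
  Integrable.of_integral_ne_zero (by simp [hq.2])

lemma rev_nonneg {d : ℕ} {p q : (Fin d → ℝ) → ℝ} {α γ : ℝ} (hγ : γ ≤ 1) {x : Fin d → ℝ}
    (hp : 0 ≤ p x) (hq : 0 ≤ q x) : 0 ≤ Rev p α γ q x :=
  mul_nonneg (sub_nonneg.2 hγ) (rpow_nonneg (div_nonneg hp hq) _)

lemma aestronglyMeasurable_rev_mul {d : ℕ} {μ : Measure (Fin d → ℝ)} {p q : (Fin d → ℝ) → ℝ}
    {α γ : ℝ} (hp : AEMeasurable p μ) (hq : AEMeasurable q μ) :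
    AEStronglyMeasurable (fun x => Rev p α γ q x * q x) μ :=
  (((hp.div hq).pow_const α).const_mul _ |>.mul hq).aestronglyMeasurable

lemma IsEquilibrium.utilW_le_revWg {d : ℕ} {X : Set (Fin d → ℝ)} {p g : (Fin d → ℝ) → ℝ}
    {α γ c : ℝ} {W : Scheme d} {q : (Fin d → ℝ) → ℝ}
    (heq : IsEquilibrium X p g α γ c W (fun _ => 1) q) :
    ∀ x ∈ X, UtilW p α γ c W q x ≤ RevWg X p g α γ W q :=
  fun x hx => not_lt.1 fun h => one_ne_zero (heq.2.2.1 x hx h)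

theorem stmt17_general {d : ℕ} (X : Set (Fin d → ℝ))
    (hXc : IsCompact X)
    (p g : (Fin d → ℝ) → ℝ) (hp : p ∈ PSet X) (hg : g ∈ PSet X)
    (α γ c : ℝ) (hγ : γ ∈ Icc (0 : ℝ) 1) (hc : 0 < c)
    (v w : ℝ) (hw : 0 ≤ w)
    (heq : IsEquilibrium X p g α γ c (Wthr p α γ v w) (fun _ => 1) g) :
    (1 - γ) * sSup ((fun x => (p x / g x) ^ α) '' X) ≤
      (1 - γ) * (∫ x in X, (p x / g x) ^ α * g x) + c := by
  have hXm : MeasurableSet X := hXc.measurableSet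
  have hp0 := nonneg_of_mem_DSet hp.1
  have hg0 := nonneg_of_mem_DSet hg.1
  have hgint := integrableOn_of_mem_PSet hg
  have hγ0 : 0 ≤ 1 - γ := sub_nonneg.2 hγ.2
  set I := ∫ x in X, (p x / g x) ^ α * g x
  have hI0 : 0 ≤ I := setIntegral_nonneg hXm fun x hx =>
    mul_nonneg (rpow_nonneg (div_nonneg (hp0 x hx) (hg0 x hx)) _) (hg0 x hx)
  have hRev0 : ∀ x ∈ X, 0 ≤ Rev p α γ g x := fun x hx => rev_nonneg hγ.2 (hp0 x hx) (hg0 x hx)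
  have hRev_int : ∫ x in X, Rev p α γ g x * g x = (1 - γ) * I := by
    simp only [Rev, mul_assoc]
    exact integral_const_mul _ _
  refine mul_sSup_image_le hγ0 (add_nonneg (mul_nonneg hγ0 hI0) hc.le)
    (le_add_of_threshold_response (f := Rev p α γ g) heq.utilW_le_revWg ?_ fun hbelow => ?_)
  · calc RevWg X p g α γ (Wthr p α γ v w) g
        ≤ (∫ x in X, Rev p α γ g x * g x) + w * ∫ x in X, g x :=
          setIntegral_add_mul_le (W := fun x => Wthr p α γ v w x g) hXm
            (aestronglyMeasurable_rev_mul (integrableOn_of_mem_PSet hp).aemeasurable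
              hgint.aemeasurable) hRev0
            (fun x _ => by unfold Wthr; split_ifs <;> simp [hw]) hw hgint hg0
      _ = (1 - γ) * I + w := by rw [hRev_int, hg.2, mul_one]
  · calc RevWg X p g α γ (Wthr p α γ v w) g = ∫ x in X, Rev p α γ g x * g x :=
          setIntegral_congr_fun hXm fun x hx => by
            rw [RevW, Wthr, if_neg (not_le.2 (hbelow x hx)), add_zero]
      _ ≤ (1 - γ) * I := hRev_int.le

/-- Proposition 3, converse direction. -/
theorem stmt17 {d : ℕ} (hd : 1 ≤ d) (X : Set (Fin d → ℝ))
    (hXc : IsCompact X) (hX0 : 0 < volume X)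
    (p g : (Fin d → ℝ) → ℝ) (hp : p ∈ PSet X) (hg : g ∈ PSet X)
    (α γ c : ℝ) (hα : α ∈ Ioo (0 : ℝ) 1) (hγ : γ ∈ Icc (0 : ℝ) 1) (hc : 0 < c)
    (v w : ℝ) (hv : 0 ≤ v) (hw : 0 ≤ w)
    (heq : IsEquilibrium X p g α γ c (Wthr p α γ v w) (fun _ => 1) g) :
    (1 - γ) * sSup ((fun x => (p x / g x) ^ α) '' X) ≤
      (1 - γ) * (∫ x in X, (p x / g x) ^ α * g x) + c :=
  stmt17_general X hXc p g hp hg α γ c hγ hc v w hw heq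

end GenAIPlatform
end
end
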